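/- Let k be a field of characteristic 0, V a k-vector space, and b : V × V → V an alternating k-bilinear map. For each n ≥ 1 let d_n : ⋀ⁿV → ⋀ⁿ⁻¹V be the k-linear map determined by d_n(v₁∧⋯∧vₙ) = Σ_{1≤i<j≤n} (−1)^{i+j} b(vᵢ,vⱼ) ∧ v₁∧⋯∧v̂ᵢ∧⋯∧v̂ⱼ∧⋯∧vₙ (a hat means the factor is omitted; d₁ = 0). Then d_{n−1} ∘ d_n = 0 for all n ≥ 2 if and only if b satisfies the Jacobi identity b(b(x,y),z) + b(b(y,z),x) + b(b(z,x),y) = 0 for all x, y, z ∈ V. -/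

import Mathlib

/-!
Write `ad x` for the even derivation of `⋀V` extending `b x : V → V`. Peeling off the first
factor of a wedge product shows `d (ι x * W) = -(ι x * d W) - ad x W` for `W ∈ ⋀ⁿV`. The Jacobi
identity says `[ad x, ad y] = ad (b x y)` on `V`, hence on all of `⋀V`, and with the recursion
this gives `d ∘ ad x = ad x ∘ d`; an induction on the degree then yields `d ∘ d = 0`.
Conversely, `d (d (x ∧ y ∧ z)) = ι (b (b x y) z + b (b y z) x + b (b z x) y)`, and `ι` is
injective.
-/

theorem Fin.sum_pairs_succ_of_lt {M : Type*} [AddCommMonoid M] {n : ℕ}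
    (F : Fin (n + 1) × Fin (n + 1) → M) (hF : ∀ p, ¬ p.1 < p.2 → F p = 0) :
    ∑ p, F p = ∑ j : Fin n, F (0, j.succ) + ∑ i : Fin n, ∑ j : Fin n, F (i.succ, j.succ) := by
  rw [Fintype.sum_prod_type, Fin.sum_univ_succ, Fin.sum_univ_succ, hF (0, 0) (lt_irrefl _),
    zero_add]
  congr 1
  refine Finset.sum_congr rfl fun i _ => ?_
  rw [Fin.sum_univ_succ, hF (i.succ, 0) (by simp), zero_add]

namespace ExteriorAlgebra

variable {k V : Type*} [CommRing k] [AddCommGroup V] [Module k V]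

theorem ι_mul_ι_mul_swap (a c : V) (q : ExteriorAlgebra k V) :
    ι k a * (ι k c * q) = -(ι k c * (ι k a * q)) := by
  rw [← mul_assoc, ← mul_assoc, ← neg_mul, eq_neg_of_add_eq_zero_left (ι_add_mul_swap a c)]

theorem ι_mul_mem_exteriorPower (y : V) {n : ℕ} {W : ExteriorAlgebra k V}
    (hW : W ∈ ⋀[k]^n V) : ι k y * W ∈ ⋀[k]^(n + 1) V := by
  rw [exteriorPower, pow_succ']
  exact Submodule.mul_mem_mul (LinearMap.mem_range_self _ y) hW

end ExteriorAlgebra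

namespace ChevalleyEilenberg

open ExteriorAlgebra TrivSqZeroExt

variable {k V : Type*} [CommRing k] [AddCommGroup V] [Module k V]

section Derivation

variable (b : V →ₗ[k] V →ₗ[k] V)

/-- `a ↦ a + ε • ad x a`: algebra maps into the dual numbers lifting the identity are
derivations. -/
noncomputable def derivAlgHom (x : V) :
    ExteriorAlgebra k V →ₐ[k] DualNumber (ExteriorAlgebra k V) :=
  lift k ⟨(inlAlgHom k _ _).toLinearMap ∘ₗ ι k + (inrHom _ _).restrictScalars k ∘ₗ ι k ∘ₗ b x,
    fun v => by ext <;> simp [ι_add_mul_swap]⟩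

noncomputable def ad (x : V) : ExteriorAlgebra k V →ₗ[k] ExteriorAlgebra k V :=
  (sndHom _ _).restrictScalars k ∘ₗ (derivAlgHom b x).toLinearMap

@[simp]
theorem fst_derivAlgHom (x : V) (a : ExteriorAlgebra k V) : (derivAlgHom b x a).fst = a := by
  change (fstHom k _ _).comp (derivAlgHom b x) a = AlgHom.id k _ a
  congr 1
  ext v
  simp [derivAlgHom]

@[simp]
theorem ad_ι (x v : V) : ad b x (ι k v) = ι k (b x v) := by
  simp [ad, derivAlgHom]

@[simp]
theorem ad_algebraMap (x : V) (r : k) : ad b x (algebraMap k _ r) = 0 := by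
  simp [ad, algebraMap_eq_inl']

@[simp]
theorem ad_one (x : V) : ad b x 1 = 0 := by
  simpa using ad_algebraMap b x 1

theorem ad_mul (x : V) (a c : ExteriorAlgebra k V) :
    ad b x (a * c) = ad b x a * c + a * ad b x c := by
  simp [ad, snd_mul, add_comm]

theorem ad_mem_exteriorPower (x : V) {n : ℕ} {W : ExteriorAlgebra k V} (hW : W ∈ ⋀[k]^n V) :
    ad b x W ∈ ⋀[k]^n V := by
  induction hW using Submodule.pow_induction_on_left' with
  | algebraMap r => simp
  | add _ _ _ _ _ hu hw => simpa using add_mem hu hw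
  | mem_mul m hm i W hW ih =>
    obtain ⟨y, rfl⟩ := hm
    rw [ad_mul, ad_ι]
    exact add_mem (ι_mul_mem_exteriorPower _ hW) (ι_mul_mem_exteriorPower _ ih)

theorem ad_ιMulti (x : V) {n : ℕ} (v : Fin n → V) :
    ad b x (ιMulti k n v) = ∑ j : Fin n, ((-1 : k) ^ (j : ℕ)) •
      (ι k (b x (v j)) * ((List.ofFn fun l => ι k (v l)).eraseIdx j).prod) := by
  induction n with
  | zero => simp
  | succ n ih =>
    rw [ιMulti_succ_apply, ad_mul, ad_ι, ih, Fin.sum_univ_succ, Finset.mul_sum]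
    congr 1
    · simp [ιMulti_apply, Matrix.vecTail]
    · refine Finset.sum_congr rfl fun j _ => ?_
      rw [Fin.val_succ, List.ofFn_succ, List.eraseIdx_cons_succ, List.prod_cons, pow_succ,
        ι_mul_ι_mul_swap, mul_smul_comm]
      simp [Matrix.vecTail]

theorem leibniz_of_jacobi (hb : b.IsAlt)
    (hj : ∀ x y z : V, b (b x y) z + b (b y z) x + b (b z x) y = 0) (x y v : V) :
    b x (b y v) = b (b x y) v + b y (b x v) := by
  have h := hj x y v
  rw [← hb.neg x (b y v), ← hb.neg x v, map_neg, LinearMap.neg_apply, ← hb.neg y (b x v)] at h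
  rw [← sub_eq_zero, ← neg_eq_zero, ← h]
  abel

theorem ad_bracket (hb : b.IsAlt)
    (hj : ∀ x y z : V, b (b x y) z + b (b y z) x + b (b z x) y = 0) (x y : V)
    (a : ExteriorAlgebra k V) :
    ad b x (ad b y a) = ad b (b x y) a + ad b y (ad b x a) := by
  induction a using ExteriorAlgebra.induction with
  | algebraMap r => simp
  | ι v => simp only [ad_ι, leibniz_of_jacobi b hb hj x y v, map_add]
  | mul a c ha hc =>
    simp only [ad_mul, map_add, ha, hc, add_mul, mul_add]
    abel
  | add a c ha hc =>
    simp only [map_add, ha, hc]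
    abel

end Derivation

def IsBoundary (b : V →ₗ[k] V →ₗ[k] V)
    (d : ℕ → ExteriorAlgebra k V →ₗ[k] ExteriorAlgebra k V) : Prop :=
  ∀ (n : ℕ) (v : Fin n → V),
    d n (ιMulti k n v) =
      ∑ p : Fin n × Fin n,
        if p.1 < p.2 then
          ((-1 : k) ^ ((p.1 : ℕ) + (p.2 : ℕ))) •
            (ι k (b (v p.1) (v p.2)) *
              (((List.ofFn fun l => ι k (v l)).eraseIdx p.2).eraseIdx p.1).prod)
        else 0

namespace IsBoundary

variable {b : V →ₗ[k] V →ₗ[k] V} {d : ℕ → ExteriorAlgebra k V →ₗ[k] ExteriorAlgebra k V}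
  (hd : IsBoundary b d)
include hd

theorem apply_zero_one : d 0 1 = 0 := by
  simpa using hd 0 Fin.elim0

theorem apply_zero_eq_zero {W : ExteriorAlgebra k V} (hW : W ∈ ⋀[k]^0 V) : d 0 W = 0 := by
  rw [exteriorPower, pow_zero] at hW
  obtain ⟨r, rfl⟩ := Submodule.mem_one.mp hW
  rw [Algebra.algebraMap_eq_smul_one, map_smul, hd.apply_zero_one, smul_zero]

/-- The pairs `(0, j + 1)` give `-ad x`, the pairs `(i + 1, j + 1)` give `-(ι x * d ·)`. -/
theorem apply_ι_mul_ιMulti (n : ℕ) (x : V) (v : Fin n → V) :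
    d (n + 1) (ι k x * ιMulti k n v) =
      -(ι k x * d n (ιMulti k n v)) - ad b x (ιMulti k n v) := by
  have h := hd (n + 1) (Fin.cons x v)
  rw [ιMulti_succ_apply] at h
  refine h.trans ((Fin.sum_pairs_succ_of_lt _ fun p hp => if_neg hp).trans ?_)
  rw [hd n v, ad_ιMulti, sub_eq_neg_add]
  congr 1
  · rw [← Finset.sum_neg_distrib]
    refine Finset.sum_congr rfl fun j _ => ?_
    rw [if_pos (Fin.succ_pos j)]
    simp only [Fin.cons_zero, Fin.cons_succ, Fin.val_zero, Fin.val_succ, zero_add,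
      List.ofFn_succ, List.eraseIdx_cons_succ, List.eraseIdx_cons_zero, pow_succ,
      mul_neg, mul_one, neg_smul]
  · rw [Fintype.sum_prod_type]
    simp only [Finset.mul_sum, ← Finset.sum_neg_distrib]
    refine Finset.sum_congr rfl fun i _ => Finset.sum_congr rfl fun j _ => ?_
    by_cases hij : i < j
    · rw [if_pos (Fin.succ_lt_succ_iff.mpr hij), if_pos hij]
      simp only [Fin.cons_zero, Fin.cons_succ, Fin.val_succ, List.ofFn_succ,
        List.eraseIdx_cons_succ, List.prod_cons]
      rw [show (i : ℕ) + 1 + ((j : ℕ) + 1) = ((i : ℕ) + (j : ℕ)) + 2 by ring, pow_add,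
        neg_one_sq, mul_one, ι_mul_ι_mul_swap, smul_neg, mul_smul_comm]
    · rw [if_neg (mt Fin.succ_lt_succ_iff.mp hij), if_neg hij]
      simp

theorem apply_ι_mul (n : ℕ) (x : V) {W : ExteriorAlgebra k V} (hW : W ∈ ⋀[k]^n V) :
    d (n + 1) (ι k x * W) = -(ι k x * d n W) - ad b x W := by
  rw [← ιMulti_span_fixedDegree] at hW
  induction hW using Submodule.span_induction with
  | mem w hw =>
    obtain ⟨v, rfl⟩ := hw
    exact hd.apply_ι_mul_ιMulti n x v
  | zero => simp
  | add u w _ _ hu hw =>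
    simp only [mul_add, map_add, hu, hw]
    abel
  | smul c u _ hu => simp only [mul_smul_comm, map_smul, hu, smul_sub, smul_neg]

theorem apply_mem_exteriorPower {n : ℕ} {W : ExteriorAlgebra k V} (hW : W ∈ ⋀[k]^n V) :
    d n W ∈ ⋀[k]^(n - 1) V := by
  induction hW using Submodule.pow_induction_on_left' with
  | algebraMap r => simp [Algebra.algebraMap_eq_smul_one, hd.apply_zero_one]
  | add _ _ _ _ _ hu hw => simpa using add_mem hu hw
  | mem_mul m hm i W hW ih =>
    obtain ⟨y, rfl⟩ := hm
    rw [hd.apply_ι_mul i y hW, Nat.succ_sub_one]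
    refine sub_mem (neg_mem ?_) (ad_mem_exteriorPower b y hW)
    cases i with
    | zero => simp [hd.apply_zero_eq_zero hW]
    | succ j => exact ι_mul_mem_exteriorPower y ih

theorem apply_ad (hb : b.IsAlt)
    (hj : ∀ x y z : V, b (b x y) z + b (b y z) x + b (b z x) y = 0) (x : V) {n : ℕ}
    {W : ExteriorAlgebra k V} (hW : W ∈ ⋀[k]^n V) : d n (ad b x W) = ad b x (d n W) := by
  induction hW using Submodule.pow_induction_on_left' with
  | algebraMap r => simp [Algebra.algebraMap_eq_smul_one, hd.apply_zero_one]
  | add _ _ _ _ _ hu hw => simp only [map_add, hu, hw]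
  | mem_mul m hm i U hU ih =>
    obtain ⟨y, rfl⟩ := hm
    rw [ad_mul, ad_ι, map_add, hd.apply_ι_mul i _ hU,
      hd.apply_ι_mul i y (ad_mem_exteriorPower b x hU), ih, hd.apply_ι_mul i y hU, map_sub,
      map_neg, ad_mul, ad_ι, ad_bracket b hb hj x y]
    abel

theorem apply_apply_eq_zero (hb : b.IsAlt)
    (hj : ∀ x y z : V, b (b x y) z + b (b y z) x + b (b z x) y = 0) {n : ℕ}
    {W : ExteriorAlgebra k V} (hW : W ∈ ⋀[k]^n V) : d (n - 1) (d n W) = 0 := by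
  induction hW using Submodule.pow_induction_on_left' with
  | algebraMap r => simp [Algebra.algebraMap_eq_smul_one, hd.apply_zero_one]
  | add _ _ _ _ _ hu hw => simp only [map_add, hu, hw, add_zero]
  | mem_mul m hm i U hU ih =>
    obtain ⟨y, rfl⟩ := hm
    rw [hd.apply_ι_mul i y hU, Nat.succ_sub_one, map_sub, map_neg]
    cases i with
    | zero =>
      simp [hd.apply_zero_eq_zero hU, hd.apply_zero_eq_zero (ad_mem_exteriorPower b y hU)]
    | succ j =>
      rw [Nat.add_sub_cancel] at ih
      rw [hd.apply_ι_mul j y (hd.apply_mem_exteriorPower hU), ih, hd.apply_ad hb hj y hU]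
      simp

theorem apply_one_ι (c : V) : d 1 (ι k c) = 0 := by
  simpa [hd.apply_zero_one] using hd.apply_ι_mul_ιMulti 0 c Fin.elim0

theorem apply_two_ι_mul_ι (a c : V) : d 2 (ι k a * ι k c) = -ι k (b a c) := by
  simpa [hd.apply_one_ι c] using hd.apply_ι_mul_ιMulti 1 a ![c]

theorem apply_two_apply_three (hb : b.IsAlt) (x y z : V) :
    d 2 (d 3 (ιMulti k 3 ![x, y, z])) = ι k (b (b x y) z + b (b y z) x + b (b z x) y) := by
  have h3 : d 3 (ιMulti k 3 ![x, y, z]) =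
      ι k x * ι k (b y z) - (ι k (b x y) * ι k z + ι k y * ι k (b x z)) := by
    simpa [hd.apply_two_ι_mul_ι, ad_mul] using hd.apply_ι_mul_ιMulti 2 x ![y, z]
  rw [← hb.neg x (b y z), ← hb.neg y (b z x), ← hb.neg x z, h3]
  simp only [map_sub, map_add, map_neg, neg_neg, hd.apply_two_ι_mul_ι]
  abel

end IsBoundary

end ChevalleyEilenberg

theorem chevalleyEilenberg_boundary_sq_zero_iff_jacobi_general
    (k V : Type*) [Field k] [AddCommGroup V] [Module k V]
    (b : V →ₗ[k] V →ₗ[k] V) (hb : ∀ v : V, b v v = 0)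
    (d : ℕ → ExteriorAlgebra k V →ₗ[k] ExteriorAlgebra k V)
    (hd : ∀ (n : ℕ) (v : Fin n → V),
      d n (List.ofFn fun l => ExteriorAlgebra.ι k (v l)).prod =
        ∑ p : Fin n × Fin n,
          if p.1 < p.2 then
            ((-1 : k) ^ ((p.1 : ℕ) + (p.2 : ℕ))) •
              (ExteriorAlgebra.ι k (b (v p.1) (v p.2)) *
                (((List.ofFn fun l => ExteriorAlgebra.ι k (v l)).eraseIdx
                  (p.2 : ℕ)).eraseIdx (p.1 : ℕ)).prod)
          else 0) :
    (∀ n : ℕ, 2 ≤ n → ∀ v : Fin n → V,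
        d (n - 1) (d n (List.ofFn fun l => ExteriorAlgebra.ι k (v l)).prod) = 0) ↔
      ∀ x y z : V, b (b x y) z + b (b y z) x + b (b z x) y = 0 := by
  have hd : ChevalleyEilenberg.IsBoundary b d := hd
  constructor
  · intro H x y z
    rw [← ExteriorAlgebra.ι_eq_zero_iff (R := k), ← hd.apply_two_apply_three hb]
    exact H 3 (by norm_num) ![x, y, z]
  · intro hj n _ v
    exact hd.apply_apply_eq_zero hb hj (ExteriorAlgebra.ιMulti_range k n ⟨v, rfl⟩)

theorem chevalleyEilenberg_boundary_sq_zero_iff_jacobi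
    (k V : Type*) [Field k] [CharZero k] [AddCommGroup V] [Module k V]
    (b : V →ₗ[k] V →ₗ[k] V) (hb : ∀ v : V, b v v = 0)
    (d : ℕ → ExteriorAlgebra k V →ₗ[k] ExteriorAlgebra k V)
    (hd : ∀ (n : ℕ) (v : Fin n → V),
      d n (List.ofFn fun l => ExteriorAlgebra.ι k (v l)).prod =
        ∑ p : Fin n × Fin n,
          if p.1 < p.2 then
            ((-1 : k) ^ ((p.1 : ℕ) + (p.2 : ℕ))) •
              (ExteriorAlgebra.ι k (b (v p.1) (v p.2)) *
                (((List.ofFn fun l => ExteriorAlgebra.ι k (v l)).eraseIdx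
                  (p.2 : ℕ)).eraseIdx (p.1 : ℕ)).prod)
          else 0) :
    (∀ n : ℕ, 2 ≤ n → ∀ v : Fin n → V,
        d (n - 1) (d n (List.ofFn fun l => ExteriorAlgebra.ι k (v l)).prod) = 0) ↔
      ∀ x y z : V, b (b x y) z + b (b y z) x + b (b z x) y = 0 :=
  chevalleyEilenberg_boundary_sq_zero_iff_jacobi_general k V b hb d hd
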